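/- arXiv:2304.12095 — 4 statements merged into one kernel-verified Lean document; each statement's English description precedes it below -/
import Mathlib

section
/- (Singleton Bound) Let 𝒞 ⊆ 𝕄 be a nonzero code and let r ∈ {1,…,dim(𝒞)}. Let j ∈ {1,…,ℓ} and 0 ≤ δ ≤ n_j − 1 be such that d_r(𝒞) − 1 ≥ Σ_{i=1}^{j−1} n_i + δ. Then dim(𝒞) ≤ Σ_{i=j}^{ℓ} m_i n_i − m_j δ + r − 1. -/
open Matrix Finset

section SumRank

variable {F : Type*} [Field F] [Fintype F] {ℓ : ℕ} {m n : Fin ℓ → ℕ}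

/-- The sum-rank weight of a tuple of matrices. -/
noncomputable def srk (C : ∀ i : Fin ℓ, Matrix (Fin (m i)) (Fin (n i)) F) : ℕ :=
  ∑ i, (C i).rank

/-- The weighted sum `∑ m i * rank (C i)`. -/
noncomputable def wsum (C : ∀ i : Fin ℓ, Matrix (Fin (m i)) (Fin (n i)) F) : ℕ :=
  ∑ i, m i * (C i).rank

/-- The minimum sum-rank distance of a code. -/
noncomputable def dmin (𝒞 : Submodule F (∀ i : Fin ℓ, Matrix (Fin (m i)) (Fin (n i)) F)) : ℕ :=
  sInf {w | ∃ C ∈ 𝒞, C ≠ 0 ∧ srk C = w}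

/-- The maximum sum-rank weight of a code. -/
noncomputable def maxsrk (𝒞 : Submodule F (∀ i : Fin ℓ, Matrix (Fin (m i)) (Fin (n i)) F)) : ℕ :=
  sSup {w | ∃ C ∈ 𝒞, srk C = w}

/-- An optimal rank-metric anticode in `F^(m×n)`. -/
def IsOptRkAnticode {m n : ℕ} (A : Submodule F (Matrix (Fin m) (Fin n) F)) : Prop :=
  Module.finrank F A = m * sSup {r | ∃ M ∈ A, (M : Matrix (Fin m) (Fin n) F).rank = r}

/-- An optimal sum-rank-metric anticode. -/
def IsOptAnticode (𝒞 : Submodule F (∀ i : Fin ℓ, Matrix (Fin (m i)) (Fin (n i)) F)) : Prop :=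
  Module.finrank F 𝒞 = sSup {w | ∃ C ∈ 𝒞, wsum C = w}

/-- The weight of a code. -/
noncomputable def wtCode (𝒞 : Submodule F (∀ i : Fin ℓ, Matrix (Fin (m i)) (Fin (n i)) F)) : ℕ :=
  sInf {w | ∃ A : ∀ i : Fin ℓ, Submodule F (Matrix (Fin (m i)) (Fin (n i)) F),
    (∀ i, IsOptRkAnticode (A i)) ∧ 𝒞 ≤ Submodule.pi Set.univ A ∧
    w = maxsrk (Submodule.pi Set.univ A)}

/-- The `r`-th generalized sum-rank weight of a code. -/
noncomputable def genWt (𝒞 : Submodule F (∀ i : Fin ℓ, Matrix (Fin (m i)) (Fin (n i)) F))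
    (r : ℕ) : ℕ :=
  sInf {w | ∃ 𝒟 : Submodule F (∀ i : Fin ℓ, Matrix (Fin (m i)) (Fin (n i)) F),
    𝒟 ≤ 𝒞 ∧ r ≤ Module.finrank F 𝒟 ∧ w = wtCode 𝒟}

/-- The trace-dual of a code. -/
def dualCode (𝒞 : Submodule F (∀ i : Fin ℓ, Matrix (Fin (m i)) (Fin (n i)) F)) :
    Submodule F (∀ i : Fin ℓ, Matrix (Fin (m i)) (Fin (n i)) F) where
  carrier := {D | ∀ C ∈ 𝒞, ∑ i, Matrix.trace (D i * (C i)ᵀ) = 0}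
  add_mem' := by
    intro a b ha hb C hC
    have h1 := ha C hC
    have h2 := hb C hC
    simp only [Pi.add_apply, Matrix.add_mul, Matrix.trace_add, Finset.sum_add_distrib,
      Set.mem_setOf_eq] at *
    rw [h1, h2, add_zero]
  zero_mem' := by
    intro C hC
    simp
  smul_mem' := by
    intro r a ha C hC
    have h1 := ha C hC
    simp only [Pi.smul_apply, Matrix.smul_mul, Matrix.trace_smul, ← Finset.smul_sum,
      Set.mem_setOf_eq] at *
    rw [h1, smul_zero]

/-- The MSRD property. -/
def IsMSRD (𝒞 : Submodule F (∀ i : Fin ℓ, Matrix (Fin (m i)) (Fin (n i)) F)) : Prop :=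
  ∃ (j : Fin ℓ) (δ : ℕ), δ ≤ n j - 1 ∧
    dmin 𝒞 = ∑ i ∈ Finset.Iio j, n i + δ + 1 ∧
    Module.finrank F 𝒞 = ∑ i ∈ Finset.Ici j, m i * n i - δ * m j

end SumRank

/-!
Take for `𝒜` the product of the optimal anticodes of matrices supported on the first `dᵢ` columns,
where `dᵢ = nᵢ` for `i < j`, `d_j = δ` and `dᵢ = 0` for `i > j`. Every element of `𝒜` has sum-rank
at most `∑_{i<j} nᵢ + δ < d_r(𝒞)`, so `dim (𝒞 ∩ 𝒜) < r`, and
`dim 𝒞 + dim 𝒜 ≤ dim 𝕄 + dim (𝒞 ∩ 𝒜)` with `dim 𝒜 = ∑_{i<j} mᵢ nᵢ + m_j δ` is the bound.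
-/

namespace Finset

variable {ι M : Type*} [Fintype ι] [LinearOrder ι] [LocallyFiniteOrderBot ι] [AddCommMonoid M]

lemma sum_Iio_add_sum_Ici [LocallyFiniteOrderTop ι] (f : ι → M) (j : ι) :
    ∑ i ∈ Iio j, f i + ∑ i ∈ Ici j, f i = ∑ i, f i := by
  rw [← sum_filter_add_sum_filter_not univ (· < j), filter_gt_eq_Iio]
  simp only [not_lt, filter_le_eq_Ici]

lemma sum_ite_lt_ite_eq (f g : ι → M) (j : ι) :
    ∑ i, (if i < j then f i else if i = j then g i else 0) = ∑ i ∈ Iio j, f i + g j := by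
  rw [← sum_filter_add_sum_filter_not univ (· < j), filter_gt_eq_Iio]
  congr 1
  · exact sum_congr rfl fun i hi => if_pos (mem_Iio.1 hi)
  · rw [sum_congr rfl fun i hi => if_neg (mem_filter.1 hi).2, sum_ite_eq']
    simp

end Finset

namespace Matrix

lemma one_submatrix_mul_transpose {R κ ν : Type*} [Semiring R] [Fintype ν] [DecidableEq κ]
    [DecidableEq ν] {e : κ → ν} (he : Function.Injective e) :
    (1 : Matrix ν ν R).submatrix e id * ((1 : Matrix ν ν R).submatrix e id)ᵀ = 1 := by
  rw [transpose_submatrix, transpose_one,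
    ← submatrix_mul (1 : Matrix ν ν R) 1 e id e Function.bijective_id, Matrix.mul_one,
    submatrix_one _ he]

variable {F ι κ ν : Type*} [Field F] [Fintype κ] [Fintype ν] [DecidableEq ν]

variable (F) in
/-- The matrices whose columns outside `Set.range e` vanish, presented as the products `N * J`
with `J = (1 : Matrix ν ν F).submatrix e id`. -/
def colsSupportedOn (ι : Type*) (e : κ → ν) : Submodule F (Matrix ι ν F) :=
  LinearMap.range (mulRightLinearMap ι F ((1 : Matrix ν ν F).submatrix e id))

lemma rank_le_card_of_mem_colsSupportedOn {e : κ → ν} {M : Matrix ι ν F}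
    (hM : M ∈ colsSupportedOn F ι e) : M.rank ≤ Fintype.card κ := by
  obtain ⟨N, rfl⟩ := hM
  exact (rank_mul_le_left _ _).trans (rank_le_card_width N)

variable [Fintype ι] [DecidableEq κ]

lemma finrank_colsSupportedOn {e : κ → ν} (he : Function.Injective e) :
    Module.finrank F (colsSupportedOn F ι e) = Fintype.card ι * Fintype.card κ := by
  rw [colsSupportedOn, LinearMap.finrank_range_of_inj, Module.finrank_matrix, Module.finrank_self,
    mul_one]
  intro N N' h
  simpa only [mulRightLinearMap_apply, Matrix.mul_assoc, one_submatrix_mul_transpose he,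
    Matrix.mul_one] using
    congr_arg (· * ((1 : Matrix ν ν F).submatrix e id)ᵀ) h

lemma exists_mem_colsSupportedOn_rank_eq [DecidableEq ι] {e : κ → ν} (he : Function.Injective e)
    (h : Fintype.card κ ≤ Fintype.card ι) :
    ∃ M ∈ colsSupportedOn F ι e, M.rank = Fintype.card κ := by
  obtain ⟨g⟩ := Function.Embedding.nonempty_of_card_le h
  set P := (1 : Matrix ι ι F).submatrix g id
  set J := (1 : Matrix ν ν F).submatrix e id
  have hPJ : P * (Pᵀ * J) * Jᵀ = 1 := by
    rw [← Matrix.mul_assoc, one_submatrix_mul_transpose g.injective, Matrix.one_mul,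
      one_submatrix_mul_transpose he]
  refine ⟨Pᵀ * J, ⟨Pᵀ, rfl⟩, le_antisymm (rank_le_card_of_mem_colsSupportedOn ⟨Pᵀ, rfl⟩) ?_⟩
  calc Fintype.card κ = (P * (Pᵀ * J) * Jᵀ).rank := by rw [hPJ, rank_one]
    _ ≤ (P * (Pᵀ * J)).rank := rank_mul_le_left _ _
    _ ≤ (Pᵀ * J).rank := rank_mul_le_right _ _

end Matrix

open Matrix in
lemma isOptRkAnticode_colsSupportedOn {F : Type*} [Field F] {m n d : ℕ} (hdn : d ≤ n)
    (hdm : d ≤ m) : IsOptRkAnticode (colsSupportedOn F (Fin m) (Fin.castLE hdn)) := by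
  have hd : Fintype.card (Fin d) ≤ Fintype.card (Fin m) := by simpa using hdm
  obtain ⟨M, hM, hMd⟩ := exists_mem_colsSupportedOn_rank_eq (F := F) (Fin.castLE_injective hdn) hd
  have hmax : IsGreatest {r | ∃ M ∈ colsSupportedOn F (Fin m) (Fin.castLE hdn), M.rank = r} d :=
    ⟨⟨M, hM, by simpa using hMd⟩, fun _ ⟨_, hM', hr⟩ =>
      hr ▸ by simpa using rank_le_card_of_mem_colsSupportedOn hM'⟩
  rw [IsOptRkAnticode, hmax.csSup_eq, finrank_colsSupportedOn (Fin.castLE_injective hdn),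
    Fintype.card_fin, Fintype.card_fin]

section SumRankBounds

variable {F : Type*} [Field F] {ℓ : ℕ} {m n : Fin ℓ → ℕ}

lemma Submodule.finrank_pi_univ {K ι : Type*} [DivisionRing K] [Fintype ι] {φ : ι → Type*}
    [∀ i, AddCommGroup (φ i)] [∀ i, Module K (φ i)] [∀ i, FiniteDimensional K (φ i)]
    (p : ∀ i, Submodule K (φ i)) :
    Module.finrank K (Submodule.pi Set.univ p) = ∑ i, Module.finrank K (p i) := by
  let e : (∀ i, p i) ≃ₗ[K] Submodule.pi Set.univ p :=
    { toFun := fun y => ⟨fun i => y i, fun i _ => (y i).2⟩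
      map_add' := fun _ _ => rfl
      map_smul' := fun _ _ => rfl
      invFun := fun x i => ⟨x.1 i, x.2 i (Set.mem_univ i)⟩
      left_inv := fun _ => rfl
      right_inv := fun _ => rfl }
  rw [← e.finrank_eq, Module.finrank_pi_fintype]

lemma finrank_sumRankSpace :
    Module.finrank F (∀ i : Fin ℓ, Matrix (Fin (m i)) (Fin (n i)) F) = ∑ i, m i * n i := by
  simp [Module.finrank_pi_fintype, Module.finrank_matrix]

lemma maxsrk_le {𝒞 : Submodule F (∀ i : Fin ℓ, Matrix (Fin (m i)) (Fin (n i)) F)} {s : ℕ}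
    (h : ∀ C ∈ 𝒞, srk C ≤ s) : maxsrk 𝒞 ≤ s :=
  csSup_le ⟨0, 0, 𝒞.zero_mem, by simp [srk]⟩ fun _ ⟨C, hC, hw⟩ => hw ▸ h C hC

lemma genWt_le_maxsrk_pi {𝒞 𝒟 : Submodule F (∀ i : Fin ℓ, Matrix (Fin (m i)) (Fin (n i)) F)}
    {r : ℕ} {A : ∀ i, Submodule F (Matrix (Fin (m i)) (Fin (n i)) F)} (h𝒟 : 𝒟 ≤ 𝒞)
    (hr : r ≤ Module.finrank F 𝒟) (hA : ∀ i, IsOptRkAnticode (A i))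
    (h𝒟A : 𝒟 ≤ Submodule.pi Set.univ A) :
    genWt 𝒞 r ≤ maxsrk (Submodule.pi Set.univ A) :=
  calc genWt 𝒞 r ≤ wtCode 𝒟 := Nat.sInf_le ⟨𝒟, h𝒟, hr, rfl⟩
    _ ≤ maxsrk (Submodule.pi Set.univ A) := Nat.sInf_le ⟨A, hA, h𝒟A, rfl⟩

variable (F m) in
def colPrefixAnticode (d : Fin ℓ → ℕ) (hdn : ∀ i, d i ≤ n i) :
    Submodule F (∀ i : Fin ℓ, Matrix (Fin (m i)) (Fin (n i)) F) :=
  Submodule.pi Set.univ fun i => Matrix.colsSupportedOn F (Fin (m i)) (Fin.castLE (hdn i))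

variable {d : Fin ℓ → ℕ} {hdn : ∀ i, d i ≤ n i}

lemma finrank_colPrefixAnticode :
    Module.finrank F (colPrefixAnticode F m d hdn) = ∑ i, m i * d i := by
  rw [colPrefixAnticode, Submodule.finrank_pi_univ]
  simp [Matrix.finrank_colsSupportedOn (Fin.castLE_injective _)]

lemma srk_le_of_mem_colPrefixAnticode {C : ∀ i : Fin ℓ, Matrix (Fin (m i)) (Fin (n i)) F}
    (hC : C ∈ colPrefixAnticode F m d hdn) : srk C ≤ ∑ i, d i :=
  Finset.sum_le_sum fun i _ =>
    (Matrix.rank_le_card_of_mem_colsSupportedOn (hC i trivial)).trans_eq (Fintype.card_fin _)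

lemma finrank_inf_colPrefixAnticode_lt
    {𝒞 : Submodule F (∀ i : Fin ℓ, Matrix (Fin (m i)) (Fin (n i)) F)} {r : ℕ}
    (hdm : ∀ i, d i ≤ m i) (hr : 1 ≤ r) (hd : ∑ i, d i ≤ genWt 𝒞 r - 1) :
    Module.finrank F ↥(𝒞 ⊓ colPrefixAnticode F m d hdn) < r := by
  by_contra! h
  have hgen : genWt 𝒞 r ≤ ∑ i, d i :=
    (genWt_le_maxsrk_pi inf_le_left h
      (fun i => isOptRkAnticode_colsSupportedOn (hdn i) (hdm i)) inf_le_right).trans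
      (maxsrk_le fun _ => srk_le_of_mem_colPrefixAnticode)
  -- `hd` uses truncated subtraction: together with `hgen` it only yields `∑ d = 0`
  have hd0 : ∀ i ∈ Finset.univ, d i = 0 := Finset.sum_eq_zero_iff.1 (by omega)
  have hzero : Module.finrank F (colPrefixAnticode F m d hdn) = 0 := by
    rw [finrank_colPrefixAnticode]
    exact Finset.sum_eq_zero fun i hi => by rw [hd0 i hi, mul_zero]
  have := Submodule.finrank_mono (inf_le_right : 𝒞 ⊓ colPrefixAnticode F m d hdn ≤ _)
  omega

theorem finrank_add_sum_le_of_sum_le_genWt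
    {𝒞 : Submodule F (∀ i : Fin ℓ, Matrix (Fin (m i)) (Fin (n i)) F)} {r : ℕ}
    (hdn : ∀ i, d i ≤ n i) (hdm : ∀ i, d i ≤ m i) (hr : 1 ≤ r)
    (hd : ∑ i, d i ≤ genWt 𝒞 r - 1) :
    Module.finrank F 𝒞 + ∑ i, m i * d i ≤ ∑ i, m i * n i + (r - 1) := by
  have hinf := finrank_inf_colPrefixAnticode_lt (hdn := hdn) hdm hr hd
  have hdim := Submodule.finrank_sup_add_finrank_inf_eq 𝒞 (colPrefixAnticode F m d hdn)
  have hsup := (Submodule.finrank_le (𝒞 ⊔ colPrefixAnticode F m d hdn)).trans_eq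
    finrank_sumRankSpace
  rw [finrank_colPrefixAnticode] at hdim
  omega

end SumRankBounds

theorem singleton_bound_general {F : Type*} [Field F] {ℓ : ℕ}
    (m n : Fin ℓ → ℕ) (hnm : ∀ i, n i ≤ m i)
    (𝒞 : Submodule F (∀ i : Fin ℓ, Matrix (Fin (m i)) (Fin (n i)) F))
    (r : ℕ) (hr : 1 ≤ r)
    (j : Fin ℓ) (δ : ℕ) (hδ : δ ≤ n j - 1)
    (hd : ∑ i ∈ Finset.Iio j, n i + δ ≤ genWt 𝒞 r - 1) :
    Module.finrank F 𝒞 ≤ ∑ i ∈ Finset.Ici j, m i * n i - m j * δ + r - 1 := by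
  set d : Fin ℓ → ℕ := fun i => if i < j then n i else if i = j then δ else 0
  have hδn : δ ≤ n j := hδ.trans (Nat.sub_le _ _)
  have hdn : ∀ i, d i ≤ n i := fun i => by
    dsimp only [d]
    split_ifs with _ hij
    exacts [le_rfl, hij ▸ hδn, Nat.zero_le _]
  have hdsum : ∑ i, d i = ∑ i ∈ Finset.Iio j, n i + δ :=
    Finset.sum_ite_lt_ite_eq n (fun _ => δ) j
  have hmdsum : ∑ i, m i * d i = ∑ i ∈ Finset.Iio j, m i * n i + m j * δ := by
    simp only [d, mul_ite, mul_zero]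
    exact Finset.sum_ite_lt_ite_eq _ _ j
  have hbound := finrank_add_sum_le_of_sum_le_genWt (𝒞 := 𝒞) hdn
    (fun i => (hdn i).trans (hnm i)) hr (hdsum ▸ hd)
  have hsplit := Finset.sum_Iio_add_sum_Ici (fun i => m i * n i) j
  have hmδ : m j * δ ≤ ∑ i ∈ Finset.Ici j, m i * n i :=
    (Nat.mul_le_mul_left _ hδn).trans (Finset.single_le_sum (f := fun i => m i * n i)
      (fun _ _ => Nat.zero_le _) (Finset.mem_Ici.2 le_rfl))
  omega

/-- **Singleton Bound** for generalized sum-rank weights: if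
`d_r(𝒞) - 1 ≥ n₁ + ⋯ + n_{j-1} + δ` with `0 ≤ δ ≤ n_j - 1`, then
`dim 𝒞 ≤ ∑_{i ≥ j} m_i n_i - m_j δ + r - 1`. -/
theorem singleton_bound {F : Type*} [Field F] [Fintype F] {ℓ : ℕ}
    (m n : Fin ℓ → ℕ) (hℓ : 0 < ℓ) (hm : ∀ i j : Fin ℓ, i ≤ j → m j ≤ m i)
    (hmpos : ∀ i, 0 < m i) (hnm : ∀ i, n i ≤ m i) (hnpos : ∀ i, 0 < n i)
    (𝒞 : Submodule F (∀ i : Fin ℓ, Matrix (Fin (m i)) (Fin (n i)) F)) (h𝒞 : 𝒞 ≠ ⊥)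
    (r : ℕ) (hr : 1 ≤ r) (hrdim : r ≤ Module.finrank F 𝒞)
    (j : Fin ℓ) (δ : ℕ) (hδ : δ ≤ n j - 1)
    (hd : ∑ i ∈ Finset.Iio j, n i + δ ≤ genWt 𝒞 r - 1) :
    Module.finrank F 𝒞 ≤ ∑ i ∈ Finset.Ici j, m i * n i - m j * δ + r - 1 :=
  singleton_bound_general m n hnm 𝒞 r hr j δ hδ hd
end

section
/- (Classification of 𝔽_q-linear isometries) Let φ : 𝕄 → 𝕄 be an 𝔽_q-linear map with srk(φ(C)) = srk(C) for all C ∈ 𝕄. Then there exist a permutation σ of {1,…,ℓ} with the property that σ(i) = j implies m_i = m_j and n_i = n_j, and 𝔽_q-linear rank-preserving maps ψ_i : 𝔽_q^{m_i×n_i} → 𝔽_q^{m_i×n_i} (i.e. rk(ψ_i(M)) = rk(M) for all M) for i ∈ {1,…,ℓ}, such that φ(C_1,…,C_ℓ) = (ψ_1(C_{σ(1)}), …, ψ_ℓ(C_{σ(ℓ)})) for all (C_1,…,C_ℓ) ∈ 𝕄. -/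
/-! A rank-one matrix placed in block `i` is sent by `φ` to a tuple of sum-rank one, i.e. to a
rank-one matrix sitting in a single block. Two rank-one matrices in block `i` that differ by a
matrix of rank at most one must land in the same block, since otherwise the difference of their
images would have sum-rank two. The elementary matrices of block `i` are linked by such steps and
span it, so all of block `i` is mapped into one block `k i`. As `φ` preserves `srk`, it is
injective and hence bijective, which makes `k` a permutation and each induced map from block `i`
onto block `k i` a rank-preserving linear bijection; comparing dimensions `m * n` and maximal ranks
`n` shows that `k` preserves the block sizes. -/

open Matrix Finset

namespace Matrix

variable {F : Type*} [Field F] {ι κ : Type*} [Fintype κ]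

theorem rank_eq_zero_iff {M : Matrix ι κ F} : M.rank = 0 ↔ M = 0 := by
  classical
  rw [rank, Submodule.finrank_eq_zero, LinearMap.range_eq_bot, ← Matrix.toLin'_apply',
    LinearEquiv.map_eq_zero_iff]

theorem rank_neg (M : Matrix ι κ F) : (-M).rank = M.rank := by
  have : (-M).mulVecLin = -M.mulVecLin := by ext; simp
  rw [rank, rank, this, LinearMap.range_neg]

variable [DecidableEq ι] [DecidableEq κ]

theorem rank_single_one (r : ι) (s : κ) : (single r s (1 : F)).rank = 1 := by
  refine le_antisymm ?_ (Nat.one_le_iff_ne_zero.mpr ?_)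
  · rw [single_eq_single_vecMulVec_single]
    exact rank_vecMulVec_le _ _
  · rw [Ne, rank_eq_zero_iff]
    intro h
    simpa using congr_fun₂ h r s

theorem rank_single_sub_single_row_le_one (r : ι) (s s' : κ) :
    (single r s (1 : F) - single r s' 1).rank ≤ 1 := by
  rw [single_eq_single_vecMulVec_single, single_eq_single_vecMulVec_single, ← vecMulVec_sub]
  exact rank_vecMulVec_le _ _

theorem rank_single_sub_single_col_le_one (r r' : ι) (s : κ) :
    (single r s (1 : F) - single r' s 1).rank ≤ 1 := by
  rw [single_eq_single_vecMulVec_single, single_eq_single_vecMulVec_single, ← sub_vecMulVec]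
  exact rank_vecMulVec_le _ _

theorem exists_rank_eq_width {a b : ℕ} (h : b ≤ a) :
    ∃ M : Matrix (Fin a) (Fin b) F, M.rank = b := by
  set M := (1 : Matrix (Fin a) (Fin a) F).submatrix id (Fin.castLE h)
  refine ⟨M, le_antisymm (rank_le_width _) ?_⟩
  calc b = (1 : Matrix (Fin b) (Fin b) F).rank := by simp
    _ = (Mᵀ * M).rank := by
      rw [transpose_submatrix, transpose_one, ← submatrix_mul _ _ _ _ _ Function.bijective_id,
        one_mul, submatrix_one _ (Fin.castLE_injective h)]
    _ ≤ M.rank := rank_mul_le_right _ _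

theorem eq_and_eq_of_surjective_of_rank_map_eq {a b c d : ℕ} (hba : b ≤ a) (hdc : d ≤ c)
    (hb : 0 < b) (ψ : Matrix (Fin a) (Fin b) F →ₗ[F] Matrix (Fin c) (Fin d) F)
    (hψ : ∀ M, (ψ M).rank = M.rank) (hsurj : Function.Surjective ψ) : a = c ∧ b = d := by
  have hinj : Function.Injective ψ := by
    rw [← LinearMap.ker_eq_bot, LinearMap.ker_eq_bot']
    intro M hM
    rw [← rank_eq_zero_iff, ← hψ, hM, rank_zero]
  have hdim : a * b = c * d := by
    simpa [Module.finrank_matrix] using (LinearEquiv.ofBijective ψ ⟨hinj, hsurj⟩).finrank_eq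
  have hbd : b = d := by
    obtain ⟨M, hM⟩ := exists_rank_eq_width (F := F) hba
    obtain ⟨N, hN⟩ := exists_rank_eq_width (F := F) hdc
    obtain ⟨M', rfl⟩ := hsurj N
    exact le_antisymm (hM ▸ hψ M ▸ rank_le_width _) (hN ▸ hψ M' ▸ rank_le_width _)
  subst hbd
  exact ⟨Nat.eq_of_mul_eq_mul_right hb hdim, rfl⟩

end Matrix

section SumRankMetric

variable {F : Type*} [Field F] {ℓ : ℕ} {m n : Fin ℓ → ℕ}

variable (F m n) in
abbrev MatrixTuple := ∀ i : Fin ℓ, Matrix (Fin (m i)) (Fin (n i)) F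

theorem srk_eq_rank_of_forall_ne {C : MatrixTuple F m n} {k : Fin ℓ} (h : ∀ j ≠ k, C j = 0) :
    srk C = (C k).rank :=
  Finset.sum_eq_single k (fun j _ hj => by rw [h j hj, rank_zero]) (by simp)

theorem srk_single (i : Fin ℓ) (M : Matrix (Fin (m i)) (Fin (n i)) F) :
    srk (Pi.single i M : MatrixTuple F m n) = M.rank := by
  rw [srk_eq_rank_of_forall_ne (k := i) fun j hj => by simp [hj], Pi.single_eq_same]

theorem srk_eq_zero_iff {C : MatrixTuple F m n} : srk C = 0 ↔ C = 0 := by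
  simp [srk, Finset.sum_eq_zero_iff, Matrix.rank_eq_zero_iff, funext_iff]

theorem rank_add_rank_le_srk (C : MatrixTuple F m n) {p q : Fin ℓ} (h : p ≠ q) :
    (C p).rank + (C q).rank ≤ srk C := by
  have := Finset.sum_le_sum_of_subset (f := fun i => (C i).rank) (subset_univ {p, q})
  rwa [Finset.sum_pair h] at this

theorem exists_forall_ne_eq_zero_of_srk_eq_one {C : MatrixTuple F m n} (h : srk C = 1) :
    ∃ k, ∀ j ≠ k, C j = 0 := by
  obtain ⟨k, hk⟩ : ∃ k, C k ≠ 0 := by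
    by_contra! h0
    rw [show C = 0 from funext h0, srk_eq_zero_iff.mpr rfl] at h
    exact zero_ne_one h
  refine ⟨k, fun j hj => rank_eq_zero_iff.mp ?_⟩
  have := rank_add_rank_le_srk C hj.symm
  have := Nat.one_le_iff_ne_zero.mpr (mt rank_eq_zero_iff.mp hk)
  omega

theorem eq_of_srk_sub_lt {x y : MatrixTuple F m n} {p q : Fin ℓ} (hx : ∀ j ≠ p, x j = 0)
    (hy : ∀ j ≠ q, y j = 0) (h : srk (x - y) < srk x + srk y) : p = q := by
  by_contra hpq
  have := rank_add_rank_le_srk (x - y) hpq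
  rw [Pi.sub_apply, Pi.sub_apply, hy p hpq, hx q (Ne.symm hpq), sub_zero, zero_sub,
    rank_neg] at this
  rw [srk_eq_rank_of_forall_ne hx, srk_eq_rank_of_forall_ne hy] at h
  omega

theorem exists_block_of_srk_map_eq_rank {a b : ℕ} (ha : 0 < a) (hb : 0 < b)
    (L : Matrix (Fin a) (Fin b) F →ₗ[F] MatrixTuple F m n) (hL : ∀ M, srk (L M) = M.rank) :
    ∃ k, ∀ M, ∀ j ≠ k, L M j = 0 := by
  choose κ hκ using fun r s =>
    exists_forall_ne_eq_zero_of_srk_eq_one ((hL (single r s 1)).trans (rank_single_one r s))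
  have hadj : ∀ r s r' s', (single r s (1 : F) - single r' s' 1).rank ≤ 1 → κ r s = κ r' s' :=
    fun r s r' s' h => eq_of_srk_sub_lt (hκ r s) (hκ r' s') <| by
      rw [← map_sub, hL, hL, hL, rank_single_one, rank_single_one]; omega
  let r₀ : Fin a := ⟨0, ha⟩
  let s₀ : Fin b := ⟨0, hb⟩
  have hκ₀ : ∀ r s, κ r s = κ r₀ s₀ := fun r s =>
    (hadj _ _ _ _ (rank_single_sub_single_row_le_one r s s₀)).trans
      (hadj _ _ _ _ (rank_single_sub_single_col_le_one r r₀ s₀))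
  refine ⟨κ r₀ s₀, fun M j hj => ?_⟩
  rw [matrix_eq_sum_single M]
  simp only [map_sum, Finset.sum_apply]
  refine Finset.sum_eq_zero fun r _ => Finset.sum_eq_zero fun s _ => ?_
  rw [← mul_one (M r s), ← smul_eq_mul, ← smul_single, map_smul, Pi.smul_apply,
    hκ r s j (hκ₀ r s ▸ hj), smul_zero]

variable {φ : MatrixTuple F m n →ₗ[F] MatrixTuple F m n}

theorem bijective_of_srk_map_eq (hφ : ∀ C, srk (φ C) = srk C) : Function.Bijective φ := by
  have hinj : Function.Injective φ := by
    rw [← LinearMap.ker_eq_bot, LinearMap.ker_eq_bot']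
    intro C hC
    rw [← srk_eq_zero_iff, ← hφ, hC, srk_eq_zero_iff.mpr rfl]
  exact ⟨hinj, LinearMap.injective_iff_surjective.mp hinj⟩

theorem apply_eq_sum_apply_single (C : MatrixTuple F m n) (i : Fin ℓ) :
    φ C i = ∑ j, φ (Pi.single j (C j)) i := by
  conv_lhs => rw [← Finset.univ_sum_single C]
  rw [map_sum, Finset.sum_apply]

def MapsBlocks (φ : MatrixTuple F m n →ₗ[F] MatrixTuple F m n) (k : Fin ℓ → Fin ℓ) : Prop :=
  ∀ i M, ∀ j ≠ k i, φ (Pi.single i M) j = 0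

theorem exists_mapsBlocks_of_srk_map_eq (hφ : ∀ C, srk (φ C) = srk C) (hm : ∀ i, 0 < m i)
    (hn : ∀ i, 0 < n i) : ∃ k, MapsBlocks φ k := by
  choose k hk using fun i => exists_block_of_srk_map_eq_rank (hm i) (hn i)
    (φ ∘ₗ LinearMap.single F (fun i => Matrix (Fin (m i)) (Fin (n i)) F) i)
    fun M => by simp [hφ, srk_single]
  exact ⟨k, hk⟩

namespace MapsBlocks

variable {k : Fin ℓ → Fin ℓ} (hk : MapsBlocks φ k)
include hk

theorem apply_eq_apply_single (hkinj : Function.Injective k) (C : MatrixTuple F m n)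
    {i j : Fin ℓ} (hij : k j = i) : φ C i = φ (Pi.single j (C j)) i := by
  rw [apply_eq_sum_apply_single,
    Finset.sum_eq_single j (fun j' _ hj' => hk j' _ i (hij ▸ hkinj.ne hj'.symm)) (by simp)]

theorem rank_apply_single (hφ : ∀ C, srk (φ C) = srk C) {i j : Fin ℓ} (hij : k j = i)
    (M : Matrix (Fin (m j)) (Fin (n j)) F) : (φ (Pi.single j M) i).rank = M.rank := by
  subst hij
  rw [← srk_eq_rank_of_forall_ne (hk j M), hφ, srk_single]

theorem surjective (hm : ∀ i, 0 < m i) (hn : ∀ i, 0 < n i)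
    (hsurj : Function.Surjective φ) : Function.Surjective k := by
  intro i
  by_contra! hi
  obtain ⟨C, hC⟩ := hsurj (Pi.single i (single ⟨0, hm i⟩ ⟨0, hn i⟩ 1))
  have h := congr_fun hC i
  rw [apply_eq_sum_apply_single, Finset.sum_eq_zero fun j _ => hk j _ i (hi j).symm,
    Pi.single_eq_same] at h
  simpa using congr_fun₂ h ⟨0, hm i⟩ ⟨0, hn i⟩

theorem dims_eq (hφ : ∀ C, srk (φ C) = srk C) (hnm : ∀ i, n i ≤ m i) (hn : ∀ i, 0 < n i)
    (hkinj : Function.Injective k) (j : Fin ℓ) : m (k j) = m j ∧ n (k j) = n j := by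
  have hsurj : Function.Surjective
      (LinearMap.proj (k j) ∘ₗ φ ∘ₗ
        LinearMap.single F (fun i => Matrix (Fin (m i)) (Fin (n i)) F) j) := by
    intro N
    obtain ⟨C, hC⟩ := (bijective_of_srk_map_eq hφ).2 (Pi.single (k j) N)
    refine ⟨C j, ?_⟩
    simpa [← hk.apply_eq_apply_single hkinj C rfl] using congr_fun hC (k j)
  obtain ⟨hm, hn⟩ := eq_and_eq_of_surjective_of_rank_map_eq (hnm j) (hnm (k j)) (hn j) _
    (fun M => by simpa using hk.rank_apply_single hφ rfl M) hsurj
  exact ⟨hm.symm, hn.symm⟩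

end MapsBlocks

end SumRankMetric

theorem isometry_classification_general {F : Type*} [Field F] {ℓ : ℕ}
    (m n : Fin ℓ → ℕ) (hnm : ∀ i, n i ≤ m i) (hnpos : ∀ i, 0 < n i)
    (φ : (∀ i : Fin ℓ, Matrix (Fin (m i)) (Fin (n i)) F) →ₗ[F]
      (∀ i : Fin ℓ, Matrix (Fin (m i)) (Fin (n i)) F))
    (hφ : ∀ C, srk (φ C) = srk C) :
    ∃ (σ : Equiv.Perm (Fin ℓ)) (hσm : ∀ i, m (σ i) = m i) (hσn : ∀ i, n (σ i) = n i)
      (ψ : ∀ i : Fin ℓ, Matrix (Fin (m i)) (Fin (n i)) F →ₗ[F] Matrix (Fin (m i)) (Fin (n i)) F),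
      (∀ i M, (ψ i M).rank = M.rank) ∧
      (∀ C : ∀ i : Fin ℓ, Matrix (Fin (m i)) (Fin (n i)) F, ∀ i : Fin ℓ,
        φ C i = ψ i (Matrix.reindex (finCongr (hσm i)) (finCongr (hσn i)) (C (σ i)))) := by
  have hmpos : ∀ i, 0 < m i := fun i => (hnpos i).trans_le (hnm i)
  obtain ⟨k, hk⟩ := exists_mapsBlocks_of_srk_map_eq hφ hmpos hnpos
  have hksurj := hk.surjective hmpos hnpos (bijective_of_srk_map_eq hφ).2
  have hkinj := Finite.injective_iff_surjective.mpr hksurj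
  let σ := (Equiv.ofBijective k ⟨hkinj, hksurj⟩).symm
  have hkσ : ∀ i, k (σ i) = i := (Equiv.ofBijective k ⟨hkinj, hksurj⟩).apply_symm_apply
  have hσm : ∀ i, m (σ i) = m i := fun i => by
    simpa [hkσ] using (hk.dims_eq hφ hnm hnpos hkinj (σ i)).1.symm
  have hσn : ∀ i, n (σ i) = n i := fun i => by
    simpa [hkσ] using (hk.dims_eq hφ hnm hnpos hkinj (σ i)).2.symm
  refine ⟨σ, hσm, hσn, fun i => LinearMap.proj i ∘ₗ φ ∘ₗ
    LinearMap.single F (fun i => Matrix (Fin (m i)) (Fin (n i)) F) (σ i) ∘ₗ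
    (reindexLinearEquiv F F (finCongr (hσm i).symm) (finCongr (hσn i).symm)).toLinearMap,
    fun i M => ?_, fun C i => ?_⟩
  · simp [hk.rank_apply_single hφ (hkσ i)]
  -- the two `reindex`es along `finCongr` cancel definitionally
  · exact hk.apply_eq_apply_single hkinj C (hkσ i)

/-- **Classification of `𝔽_q`-linear isometries of `𝕄`.**  Every `𝔽_q`-linear sum-rank-weight
preserving map `φ : 𝕄 → 𝕄` is given by a permutation `σ` of the blocks (only permuting blocks
of equal sizes) followed by rank-preserving linear maps on each block. -/
theorem isometry_classification {F : Type*} [Field F] [Fintype F] {ℓ : ℕ}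
    (m n : Fin ℓ → ℕ) (hℓ : 0 < ℓ) (hm : ∀ i j : Fin ℓ, i ≤ j → m j ≤ m i)
    (hmpos : ∀ i, 0 < m i) (hnm : ∀ i, n i ≤ m i) (hnpos : ∀ i, 0 < n i)
    (φ : (∀ i : Fin ℓ, Matrix (Fin (m i)) (Fin (n i)) F) →ₗ[F]
      (∀ i : Fin ℓ, Matrix (Fin (m i)) (Fin (n i)) F))
    (hφ : ∀ C, srk (φ C) = srk C) :
    ∃ (σ : Equiv.Perm (Fin ℓ)) (hσm : ∀ i, m (σ i) = m i) (hσn : ∀ i, n (σ i) = n i)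
      (ψ : ∀ i : Fin ℓ, Matrix (Fin (m i)) (Fin (n i)) F →ₗ[F] Matrix (Fin (m i)) (Fin (n i)) F),
      (∀ i M, (ψ i M).rank = M.rank) ∧
      (∀ C : ∀ i : Fin ℓ, Matrix (Fin (m i)) (Fin (n i)) F, ∀ i : Fin ℓ,
        φ C i = ψ i (Matrix.reindex (finCongr (hσm i)) (finCongr (hσn i)) (C (σ i)))) :=
  isometry_classification_general m n hnm hnpos φ hφ
end

section
/- (Roots of skew polynomials) Let a_1, …, a_ℓ ∈ 𝔽_{q^m}^* be such that N(a_i) ≠ N(a_j) whenever i ≠ j, where N = N_{𝔽_{q^m}/𝔽_q} is the field norm. Let d ≥ 0 and f_0, f_1, …, f_d ∈ 𝔽_{q^m} with f_d ≠ 0, and for a ∈ 𝔽_{q^m}^* let f_a : 𝔽_{q^m} → 𝔽_{q^m} be the 𝔽_q-linear map defined by f_a(β) = Σ_{j=0}^{d} f_j β^{q^j} a^{(q^j−1)/(q−1)}. Then Σ_{i=1}^{ℓ} dim_{𝔽_q}(ker(f_{a_i})) ≤ d. -/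
/-!
Put `σ_a(β) = a β^q`. It is `𝔽_q`-linear, satisfies `σ_a ∘ c = c^q ∘ σ_a` for multiplication by
`c ∈ K`, and `σ_a^j(β) = a^{(q^j-1)/(q-1)} β^{q^j}`; so `f_a = ∑ f_j σ_a^j` is the evaluation at
`σ_a` of the skew polynomial `f = ∑ f_j x^j` with `x c = c^q x`.

Induct on `d`. If some `f_{a_{i₀}}` has a root `β ≠ 0`, let `γ = a_{i₀} β^{q-1}`, so that `β` is
also a root of `σ_{a_{i₀}} - γ`. Right division gives `f = g (x - γ) + r` with `deg g = d - 1`,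
uniformly in `a`, and evaluating at `σ_{a_{i₀}}` and `β` shows `r = 0`. Hence
`dim ker f_a ≤ dim ker g_a + dim ker (σ_a - γ)` for every `a`. A nonzero element of
`ker (σ_a - γ)` forces `N(a) = N(γ)`, which holds for at most one `a_i`, and that kernel consists
of roots of `a X^q - γ X`, so it has at most `q` elements, i.e. dimension at most one.
-/

open Finset Polynomial

section SkewDivision

variable {R A : Type*} [Ring R] [Ring A] (M : A →+* R)

def skewEval (c : ℕ → A) (d : ℕ) (S : R) : R :=
  ∑ j ∈ range (d + 1), M (c j) * S ^ j

theorem skewEval_zero (c : ℕ → A) (S : R) : skewEval M c 0 S = M (c 0) := by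
  simp [skewEval]

theorem skewEval_succ (c : ℕ → A) (d : ℕ) (S : R) :
    skewEval M c (d + 1) S = skewEval M c d S + M (c (d + 1)) * S ^ (d + 1) :=
  sum_range_succ ..

theorem skewEval_update_self (c : ℕ → A) (d : ℕ) (x : A) (S : R) :
    skewEval M (Function.update c (d + 1) x) (d + 1) S =
      skewEval M c d S + M x * S ^ (d + 1) := by
  rw [skewEval_succ, Function.update_self]
  congr 1
  refine sum_congr rfl fun j hj => ?_
  rw [Function.update_of_ne (by simp at hj; omega)]

variable {M} {σ : A → A} {S : R}

theorem pow_mul_eq_of_mul_eq (hS : ∀ x, S * M x = M (σ x) * S) (n : ℕ) (x : A) :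
    S ^ n * M x = M (σ^[n] x) * S ^ n := by
  induction n generalizing x with
  | zero => simp
  | succ n ih =>
    rw [pow_succ, mul_assoc, hS, ← mul_assoc, ih, mul_assoc, Function.iterate_succ_apply]

variable (M σ)

theorem exists_skewEval_eq_mul_sub_add (γ : A) (d : ℕ) (c : ℕ → A) :
    ∃ h : ℕ → A, h d = c (d + 1) ∧ ∃ r : A, ∀ S : R, (∀ x, S * M x = M (σ x) * S) →
      skewEval M c (d + 1) S = skewEval M h d S * (S - M γ) + M r := by
  induction d generalizing c with
  | zero =>
    refine ⟨fun _ => c 1, rfl, c 0 + c 1 * γ, fun S _ => ?_⟩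
    simp only [skewEval, sum_range_succ, range_zero, sum_empty, map_add, map_mul]
    noncomm_ring
  | succ d ih =>
    -- `c_{d+2} x^{d+2} = c_{d+2} x^{d+1} (x - γ) + c_{d+2} σ^{d+1}(γ) x^{d+1}`
    obtain ⟨h, -, r, hr⟩ :=
      ih (Function.update c (d + 1) (c (d + 1) + c (d + 2) * σ^[d + 1] γ))
    refine ⟨Function.update h (d + 1) (c (d + 2)), Function.update_self .., r, fun S hS => ?_⟩
    rw [skewEval_update_self, add_mul, add_right_comm (skewEval M h d S * _), ← hr S hS,
      skewEval_update_self, skewEval_succ M c (d + 1), skewEval_succ M c d, mul_sub,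
      mul_assoc (M (c (d + 2))) (S ^ (d + 1)) (M γ), pow_mul_eq_of_mul_eq hS, map_add, map_mul]
    noncomm_ring

end SkewDivision

theorem LinearMap.finrank_ker_comp_le {F V W U : Type*} [DivisionRing F] [AddCommGroup V]
    [Module F V] [AddCommGroup W] [Module F W] [AddCommGroup U] [Module F U]
    [FiniteDimensional F V] [FiniteDimensional F W] (g : W →ₗ[F] U) (L : V →ₗ[F] W) :
    Module.finrank F (ker (g ∘ₗ L)) ≤ Module.finrank F (ker g) + Module.finrank F (ker L) := by
  have h := L.lift_rank_comap_le (ker g)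
  rw [← ker_comp] at h
  simp only [← Module.finrank_eq_rank, Cardinal.lift_natCast] at h
  exact_mod_cast h

section TwistedFrobenius

variable {Fq K : Type*} [Field Fq] [Fintype Fq] [Field K] [Algebra Fq K]

local notation "q" => Fintype.card Fq

-- `a ^ normExp = a ^ ((q ^ m - 1) / (q - 1))` is the norm of `a` over `Fq`.
local notation "normExp" => ∑ s ∈ range (Module.finrank Fq K), q ^ s

local notation "μ" => (Algebra.lmul Fq K : K →+* Module.End Fq K)

theorem pow_card_pow_normExp [Fintype K] {x : K} (hx : x ≠ 0) :
    (x ^ q) ^ normExp = x ^ normExp := by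
  have hxm : x ^ q ^ Module.finrank Fq K = x := by
    rw [← Module.card_eq_pow_finrank, FiniteField.pow_card]
  refine mul_right_cancel₀ hx ?_
  calc (x ^ q) ^ normExp * x = x ^ (q * normExp + 1) := by rw [pow_succ, pow_mul]
    _ = x ^ normExp * x ^ q ^ Module.finrank Fq K := by
      rw [← geom_sum_succ, sum_range_succ, pow_add]
    _ = x ^ normExp * x := by rw [hxm]

theorem pow_normExp_eq_of_mul_pow_card_eq [Fintype K] {a γ β : K} (hβ : β ≠ 0)
    (h : a * β ^ q = γ * β) : a ^ normExp = γ ^ normExp := by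
  have := congrArg (· ^ normExp) h
  simp only [mul_pow, pow_card_pow_normExp (Fq := Fq) hβ] at this
  exact mul_right_cancel₀ (pow_ne_zero _ hβ) this

theorem card_pow_finrank_le_natDegree [Fintype K] (V : Submodule Fq K) {P : K[X]} (hP : P ≠ 0)
    (hV : ∀ x ∈ V, P.IsRoot x) : q ^ Module.finrank Fq V ≤ P.natDegree := by
  classical
  rw [← Module.card_eq_pow_finrank, Fintype.card_subtype]
  exact card_le_degree_of_subset_roots fun x hx => (mem_roots hP).2 (hV x (by simpa using hx))

variable (Fq) in
def twistedFrobenius (a : K) : Module.End Fq K :=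
  μ a * (FiniteField.frobeniusAlgHom Fq K).toLinearMap

theorem twistedFrobenius_apply (a β : K) : twistedFrobenius Fq a β = a * β ^ q := rfl

theorem twistedFrobenius_mul_lmul (a x : K) :
    twistedFrobenius Fq a * μ x = μ (x ^ q) * twistedFrobenius Fq a := by
  ext β
  simp only [RingHom.coe_coe, Algebra.coe_lmul_eq_mul, Module.End.mul_apply,
    LinearMap.mul_apply_apply, twistedFrobenius_apply, mul_pow]
  ring

theorem twistedFrobenius_pow_apply (a β : K) (j : ℕ) :
    (twistedFrobenius Fq a ^ j) β = a ^ (∑ s ∈ range j, q ^ s) * β ^ q ^ j := by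
  induction j with
  | zero => simp
  | succ j ih =>
    rw [pow_succ', Module.End.mul_apply, ih, twistedFrobenius_apply, geom_sum_succ, pow_succ,
      pow_mul, mul_pow, ← pow_mul, ← pow_mul, pow_add]
    ring

theorem skewEval_twistedFrobenius_apply (c : ℕ → K) (d : ℕ) (a β : K) :
    skewEval μ c d (twistedFrobenius Fq a) β =
      ∑ j ∈ range (d + 1), c j * β ^ q ^ j * a ^ (∑ s ∈ range j, q ^ s) := by
  simp only [skewEval, LinearMap.sum_apply, Module.End.mul_apply, twistedFrobenius_pow_apply,
    RingHom.coe_coe, Algebra.coe_lmul_eq_mul, LinearMap.mul_apply_apply]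
  exact sum_congr rfl fun j _ => by ring

theorem finrank_ker_twistedFrobenius_sub_le_one [Fintype K] {a : K} (ha : a ≠ 0) (γ : K) :
    Module.finrank Fq (LinearMap.ker (twistedFrobenius Fq a - μ γ)) ≤ 1 := by
  have hq : 1 < q := Fintype.one_lt_card
  set P : K[X] := C a * X ^ q - C γ * X
  have hdeg : P.natDegree = q := by
    rw [natDegree_sub_eq_left_of_natDegree_lt] <;> rw [natDegree_C_mul_X_pow _ _ ha]
    exact ((natDegree_C_mul_le _ _).trans natDegree_X_le).trans_lt hq
  have hP : P ≠ 0 := ne_zero_of_natDegree_gt (hdeg ▸ hq)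
  have hcard := card_pow_finrank_le_natDegree
    (LinearMap.ker (twistedFrobenius Fq a - μ γ)) hP fun x hx => by
      simpa [P, twistedFrobenius_apply] using LinearMap.mem_ker.1 hx
  rw [hdeg] at hcard
  exact (Nat.pow_le_pow_iff_right hq).1 (by simpa using hcard)

theorem pow_normExp_eq_of_ker_ne_bot [Fintype K] {a γ : K}
    (h : LinearMap.ker (twistedFrobenius Fq a - μ γ) ≠ ⊥) : a ^ normExp = γ ^ normExp := by
  obtain ⟨β, hβ, hβ0⟩ := Submodule.exists_mem_ne_zero_of_ne_bot h
  refine pow_normExp_eq_of_mul_pow_card_eq hβ0 ?_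
  simpa [twistedFrobenius_apply, sub_eq_zero] using hβ

variable [Fintype K] {ι : Type*} [Fintype ι] {a : ι → Kˣ}

theorem sum_finrank_ker_twistedFrobenius_sub_le_one
    (ha : Pairwise fun i j => (a i : K) ^ normExp ≠ (a j : K) ^ normExp) (γ : K) :
    ∑ i, Module.finrank Fq (LinearMap.ker (twistedFrobenius Fq (a i : K) - μ γ)) ≤ 1 := by
  by_cases H : ∀ i, LinearMap.ker (twistedFrobenius Fq (a i : K) - μ γ) = ⊥
  · rw [sum_eq_zero fun i _ => by rw [H i, finrank_bot]]
    exact zero_le_one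
  obtain ⟨i₀, h₀⟩ := not_forall.1 H
  rw [sum_eq_single i₀ _ (by simp)]
  · exact finrank_ker_twistedFrobenius_sub_le_one (a i₀).ne_zero γ
  · intro i _ hi
    have hbot : LinearMap.ker (twistedFrobenius Fq (a i : K) - μ γ) = ⊥ := by
      by_contra h
      exact ha hi
        ((pow_normExp_eq_of_ker_ne_bot h).trans (pow_normExp_eq_of_ker_ne_bot h₀).symm)
    rw [hbot, finrank_bot]

theorem sum_finrank_ker_skewEval_le
    (ha : Pairwise fun i j => (a i : K) ^ normExp ≠ (a j : K) ^ normExp)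
    (d : ℕ) (c : ℕ → K) (hc : c d ≠ 0) :
    ∑ i, Module.finrank Fq (LinearMap.ker (skewEval μ c d (twistedFrobenius Fq (a i : K)))) ≤
      d := by
  induction d generalizing c with
  | zero =>
    have hker : LinearMap.ker (μ (c 0)) = ⊥ := LinearMap.ker_eq_bot.2 (mul_right_injective₀ hc)
    rw [sum_eq_zero fun i _ => by rw [skewEval_zero, hker, finrank_bot]]
  | succ d ih =>
    by_cases H : ∀ i, LinearMap.ker (skewEval μ c (d + 1) (twistedFrobenius Fq (a i : K))) = ⊥
    · rw [sum_eq_zero fun i _ => by rw [H i, finrank_bot]]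
      exact Nat.zero_le _
    obtain ⟨i₀, h₀⟩ := not_forall.1 H
    obtain ⟨β, hβ, hβ0⟩ := Submodule.exists_mem_ne_zero_of_ne_bot h₀
    set γ : K := a i₀ * β ^ q * β⁻¹
    obtain ⟨h, hd, r, hr⟩ := exists_skewEval_eq_mul_sub_add μ (· ^ q) γ d c
    have hfac (b : K) := hr _ (twistedFrobenius_mul_lmul (Fq := Fq) b)
    have hr0 : r = 0 := by
      have hβ' := LinearMap.mem_ker.1 hβ
      rw [hfac, LinearMap.add_apply, Module.End.mul_apply, LinearMap.sub_apply] at hβ'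
      simpa [γ, twistedFrobenius_apply, hβ0] using hβ'
    calc _ ≤ ∑ i, (Module.finrank Fq (LinearMap.ker (skewEval μ h d (twistedFrobenius Fq (a i)))) +
          Module.finrank Fq (LinearMap.ker (twistedFrobenius Fq (a i : K) - μ γ))) :=
        sum_le_sum fun i _ => by
          rw [hfac, hr0, map_zero, add_zero]
          exact LinearMap.finrank_ker_comp_le _ _
      _ = _ := sum_add_distrib
      _ ≤ d + 1 := add_le_add (ih h (hd ▸ hc)) (sum_finrank_ker_twistedFrobenius_sub_le_one ha γ)

end TwistedFrobenius

theorem skew_polynomial_roots_general (Fq K : Type*) [Field Fq] [Fintype Fq] [Field K] [Fintype K]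
    [Algebra Fq K] {ℓ : ℕ}
    (a : Fin ℓ → Kˣ)
    (ha : ∀ i j : Fin ℓ, i ≠ j →
      (a i : K) ^ (∑ s ∈ Finset.range (Module.finrank Fq K), Fintype.card Fq ^ s) ≠
      (a j : K) ^ (∑ s ∈ Finset.range (Module.finrank Fq K), Fintype.card Fq ^ s))
    (d : ℕ) (c : ℕ → K) (hc : c d ≠ 0)
    (f : Fin ℓ → (K →ₗ[Fq] K))
    (hf : ∀ (i : Fin ℓ) (β : K),
      f i β = ∑ j ∈ Finset.range (d + 1),
        c j * β ^ (Fintype.card Fq ^ j) *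
          (a i : K) ^ (∑ s ∈ Finset.range j, Fintype.card Fq ^ s)) :
    ∑ i, Module.finrank Fq (LinearMap.ker (f i)) ≤ d := by
  have hf_eq : f = fun i => skewEval (Algebra.lmul Fq K : K →+* Module.End Fq K) c d
      (twistedFrobenius Fq (a i : K)) :=
    funext fun i => LinearMap.ext fun β => by rw [hf, skewEval_twistedFrobenius_apply]
  subst hf_eq
  exact sum_finrank_ker_skewEval_le (fun i j => ha i j) d c hc

/-- **Roots of skew polynomials.**  Let `a₁, …, a_ℓ ∈ 𝔽_{q^m}^*` have pairwise distinct norms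
over `𝔽_q`, and let `f = f₀ + f₁x + ⋯ + f_d x^d` be a skew polynomial with `f_d ≠ 0`.  For
`a ∈ 𝔽_{q^m}^*` let `f_a(β) = ∑_j f_j β^{q^j} a^{(q^j-1)/(q-1)}` be the associated
`𝔽_q`-linear map.  Then `∑ i, dim_{𝔽_q} ker (f_{a_i}) ≤ d`. -/
theorem skew_polynomial_roots (Fq K : Type*) [Field Fq] [Fintype Fq] [Field K] [Fintype K]
    [Algebra Fq K] {ℓ : ℕ} (hℓ : 0 < ℓ)
    (a : Fin ℓ → Kˣ)
    (ha : ∀ i j : Fin ℓ, i ≠ j →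
      (a i : K) ^ (∑ s ∈ Finset.range (Module.finrank Fq K), Fintype.card Fq ^ s) ≠
      (a j : K) ^ (∑ s ∈ Finset.range (Module.finrank Fq K), Fintype.card Fq ^ s))
    (d : ℕ) (c : ℕ → K) (hc : c d ≠ 0)
    (f : Fin ℓ → (K →ₗ[Fq] K))
    (hf : ∀ (i : Fin ℓ) (β : K),
      f i β = ∑ j ∈ Finset.range (d + 1),
        c j * β ^ (Fintype.card Fq ^ j) *
          (a i : K) ^ (∑ s ∈ Finset.range j, Fintype.card Fq ^ s)) :
    ∑ i, Module.finrank Fq (LinearMap.ker (f i)) ≤ d :=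
  skew_polynomial_roots_general Fq K a ha d c hc f hf
end

section
/- (Linearized Reed–Solomon codes are MSRD) Let a_1, …, a_ℓ ∈ 𝔽_{q^m}^* be such that N_{𝔽_{q^m}/𝔽_q}(a_i) ≠ N_{𝔽_{q^m}/𝔽_q}(a_j) whenever i ≠ j, and let β_1, …, β_m be a basis of 𝔽_{q^m} over 𝔽_q. Let n_1, …, n_ℓ be positive integers with n_i ≤ m, n = n_1 + … + n_ℓ, and k ∈ {1,…,n}. For f = (f_0,…,f_{k−1}) ∈ 𝔽_{q^m}^k and a ∈ 𝔽_{q^m}^*, define f_a(β) = Σ_{j=0}^{k−1} f_j β^{q^j} a^{(q^j−1)/(q−1)}, and define the linearized Reed–Solomon code 𝒞 = {(f_{a_1}(β_1),…,f_{a_1}(β_{n_1}), f_{a_2}(β_1),…,f_{a_2}(β_{n_2}), …, f_{a_ℓ}(β_1),…,f_{a_ℓ}(β_{n_ℓ})) : f ∈ 𝔽_{q^m}^k} ⊆ 𝔽_{q^m}^n. Then 𝒞 is an 𝔽_{q^m}-linear subspace of dimension k over 𝔽_{q^m}, and every nonzero codeword c ∈ 𝒞 satisfies srk(c) ≥ n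 − k + 1; that is, 𝒞 attains the Singleton bound d(𝒞) = n − k + 1 and is MSRD. -/
open Finset

noncomputable def srkVec (Fq : Type*) {K : Type*} [Field Fq] [Field K] [Algebra Fq K]
    {ℓ : ℕ} {nn : Fin ℓ → ℕ} (c : ∀ i : Fin ℓ, Fin (nn i) → K) : ℕ :=
  ∑ i, Module.finrank Fq (Submodule.span Fq (Set.range (c i)))

/-!
Write `θ_a x = a x^q`, so that `θ_a^t x = a^{(q^t-1)/(q-1)} x^{q^t}` and the `i`-th block of
the codeword of `f` is the image of `β_1, …, β_{n_i}` under the `𝔽_q`-linear map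
`f_{a_i} = ∑ f_t θ_{a_i}^t`.
By rank–nullity that block has rank at least `n_i - dim ker f_{a_i}`, so everything rests on
`∑ᵢ dim ker f_{a_i} ≤ k - 1` for `f ≠ 0`. This goes by induction on `k`: a nonzero `γ ∈ ker f_{a_i}`
lets one divide `f = g · (X - c)` on the right in the skew polynomial ring `K[X; x ↦ x^q]`, with
`c = a_i γ^{q-1}`, and then `f_b = g_b ∘ (θ_b - c)` for every `b`. The kernel of `θ_b - c` has
dimension at most one, and is nonzero only if `b` and `c` have the same norm, which happens for at
most one `a_j`. The reverse inequality is the Singleton bound: some nonzero codeword vanishes at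
`k - 1` prescribed positions.
-/

namespace LinearizedRS

lemma finrank_comap_le {F V W : Type*} [Field F] [AddCommGroup V] [Module F V]
    [FiniteDimensional F V] [AddCommGroup W] [Module F W] (φ : V →ₗ[F] W) (p : Submodule F W)
    [FiniteDimensional F p] :
    Module.finrank F (p.comap φ) ≤ Module.finrank F p + Module.finrank F (LinearMap.ker φ) := by
  have h := φ.lift_rank_comap_le p
  rw [← Module.finrank_eq_rank F (p.comap φ), ← Module.finrank_eq_rank F p,
    ← Module.finrank_eq_rank F (LinearMap.ker φ)] at h
  simp only [Cardinal.lift_natCast] at h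
  exact_mod_cast h

lemma finrank_span_range_le_card_ne_zero {F V ι : Type*} [Field F] [AddCommGroup V]
    [Module F V] [Fintype ι] [DecidableEq V] (v : ι → V) :
    Module.finrank F (Submodule.span F (Set.range v)) ≤ #{j | v j ≠ 0} := calc
  _ ≤ Module.finrank F (Submodule.span F (Set.range fun j : {j // v j ≠ 0} => v j)) := by
    have := Module.Finite.span_of_finite F (Set.finite_range fun j : {j // v j ≠ 0} => v j)
    refine Submodule.finrank_mono (Submodule.span_le.2 (Set.range_subset_iff.2 fun j => ?_))
    by_cases hj : v j = 0
    · simp [hj]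
    · exact Submodule.subset_span ⟨⟨j, hj⟩, rfl⟩
  _ ≤ Fintype.card {j // v j ≠ 0} := finrank_range_le_card _
  _ = #{j | v j ≠ 0} := Fintype.card_subtype _

section SumRank

variable (Fq : Type*) {K : Type*} [Field Fq] [Field K] [Algebra Fq K] {ℓ : ℕ} {nn : Fin ℓ → ℕ}

lemma srkVec_zero : srkVec Fq (0 : ∀ i, Fin (nn i) → K) = 0 :=
  sum_eq_zero fun _ _ => by
    rw [Submodule.span_eq_bot.2 (by rintro _ ⟨j, rfl⟩; rfl), finrank_bot]

lemma srkVec_le_card_ne_zero [DecidableEq K] (c : ∀ i, Fin (nn i) → K) :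
    srkVec Fq c ≤ #{p : Σ i, Fin (nn i) | c p.1 p.2 ≠ 0} := calc
  srkVec Fq c ≤ ∑ i, #{j | c i j ≠ 0} :=
    sum_le_sum fun i _ => finrank_span_range_le_card_ne_zero _
  _ = #{p : Σ i, Fin (nn i) | c p.1 p.2 ≠ 0} := by
    simp only [card_filter, Fintype.sum_sigma]

theorem exists_ne_zero_srkVec_add_finrank_le (C : Submodule K (∀ i, Fin (nn i) → K))
    (hC : 0 < Module.finrank K C) :
    ∃ c ∈ C, c ≠ 0 ∧ srkVec Fq c + Module.finrank K C ≤ ∑ i, nn i + 1 := by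
  classical
  have hdim : Module.finrank K C ≤ ∑ i, nn i := by
    simpa [Module.finrank_pi_fintype] using Submodule.finrank_le C
  obtain ⟨S, -, hS⟩ := exists_subset_card_eq (s := (univ : Finset (Σ i, Fin (nn i))))
    (n := Module.finrank K C - 1)
    (by simp only [card_univ, Fintype.card_sigma, Fintype.card_fin]; omega)
  let ρ : C →ₗ[K] (S → K) :=
    LinearMap.pi fun p => (LinearMap.proj p.1.2 ∘ₗ LinearMap.proj p.1.1) ∘ₗ C.subtype
  obtain ⟨⟨c, hcC⟩, hρc, hc0⟩ := Submodule.exists_mem_ne_zero_of_ne_bot <|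
    LinearMap.ker_ne_bot_of_finrank_lt (f := ρ) (by simp; omega)
  refine ⟨c, hcC, fun h => hc0 (Subtype.ext h), ?_⟩
  have hsupp : #{p : Σ i, Fin (nn i) | c p.1 p.2 ≠ 0} ≤ #Sᶜ := by
    refine card_le_card fun p hp => mem_compl.2 fun hpS => (mem_filter.1 hp).2 ?_
    exact congrFun (LinearMap.mem_ker.1 hρc) ⟨p, hpS⟩
  have := srkVec_le_card_ne_zero Fq c
  rw [card_compl, hS] at hsupp
  simp only [Fintype.card_sigma, Fintype.card_fin] at hsupp
  omega

end SumRank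

section

variable {K : Type*} [Field K]

lemma eq_zero_of_cons_zero_eq_snoc_zero_mul {k : ℕ} {g : Fin k → K} {w : Fin (k + 1) → K}
    (h : (Fin.cons 0 g : Fin (k + 1) → K) = Fin.snoc g 0 * w) : g = 0 := by
  induction k with
  | zero => exact Subsingleton.elim _ _
  | succ k ih =>
    have hlast : g (Fin.last k) = 0 := by
      have := congrFun h (Fin.last (k + 1))
      rwa [Pi.mul_apply, Fin.snoc_last, zero_mul, ← Fin.succ_last, Fin.cons_succ] at this
    obtain ⟨g, rfl⟩ : ∃ g', g = Fin.snoc g' 0 :=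
      ⟨Fin.init g, by rw [← hlast, Fin.snoc_init_self]⟩
    rw [Fin.cons_snoc_eq_snoc_cons] at h
    have hg : g = 0 := ih (w := fun t => w t.castSucc) <| funext fun t => by
      simpa using congrFun h t.castSucc
    ext t
    refine Fin.lastCases ?_ (fun s => ?_) t <;> simp [hg]

/-- The coefficients of `g · (X - c)` in the skew polynomial ring `K[X; x ↦ x ^ q]`,
where `X * b = b ^ q * X`. -/
noncomputable def mulXSubRight (q : ℕ) (c : K) (k : ℕ) :
    (Fin k → K) →ₗ[K] (Fin (k + 1) → K) where
  toFun g := (Fin.cons 0 g : Fin (k + 1) → K) -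
    (Fin.snoc g 0 : Fin (k + 1) → K) * fun t : Fin (k + 1) => c ^ q ^ (t : ℕ)
  map_add' g h := by
    have hcons : (Fin.cons 0 (g + h) : Fin (k + 1) → K) = Fin.cons 0 g + Fin.cons 0 h := by
      ext t; refine Fin.cases ?_ (fun s => ?_) t <;> simp
    have hsnoc : (Fin.snoc (g + h) 0 : Fin (k + 1) → K) = Fin.snoc g 0 + Fin.snoc h 0 := by
      ext t; refine Fin.lastCases ?_ (fun s => ?_) t <;> simp
    rw [hcons, hsnoc]
    ring
  map_smul' r g := by
    have hcons : (Fin.cons 0 (r • g) : Fin (k + 1) → K) = r • Fin.cons 0 g := by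
      ext t; refine Fin.cases ?_ (fun s => ?_) t <;> simp
    have hsnoc : (Fin.snoc (r • g) 0 : Fin (k + 1) → K) = r • Fin.snoc g 0 := by
      ext t; refine Fin.lastCases ?_ (fun s => ?_) t <;> simp
    rw [hcons, hsnoc, RingHom.id_apply, smul_sub, smul_mul_assoc]

lemma mulXSubRight_apply (q : ℕ) (c : K) {k : ℕ} (g : Fin k → K) :
    mulXSubRight q c k g = (Fin.cons 0 g : Fin (k + 1) → K) -
      (Fin.snoc g 0 : Fin (k + 1) → K) * fun t : Fin (k + 1) => c ^ q ^ (t : ℕ) := rfl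

lemma mulXSubRight_injective (q : ℕ) (c : K) (k : ℕ) :
    Function.Injective (mulXSubRight q c k) :=
  (injective_iff_map_eq_zero _).2 fun _ hg => eq_zero_of_cons_zero_eq_snoc_zero_mul <|
    sub_eq_zero.1 ((mulXSubRight_apply q c _).symm.trans hg)

lemma pow_sub_one_mul_geom_sum_eq_one [Fintype K] {r m : ℕ} (hr : 0 < r)
    (hcard : Fintype.card K = r ^ m) {x : K} (hx : x ≠ 0) :
    x ^ ((r - 1) * ∑ s ∈ range m, r ^ s) = 1 := by
  have hgeom := geom_sum_mul_add (r - 1) m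
  rw [show r - 1 + 1 = r by omega] at hgeom
  rw [mul_comm, ← FiniteField.pow_card_sub_one_eq_one x hx, hcard, ← hgeom, Nat.add_sub_cancel]

end

variable {Fq K : Type*} [Field Fq] [Fintype Fq] [Field K] [Algebra Fq K]

local notation "q" => Fintype.card Fq

variable (Fq) in
noncomputable def twistedFrobenius (a : K) : Module.End Fq K :=
  a • (FiniteField.frobeniusAlgHom Fq K).toLinearMap

lemma twistedFrobenius_apply (a x : K) : twistedFrobenius Fq a x = a * x ^ q := rfl

lemma twistedFrobenius_pow_apply (a x : K) (t : ℕ) :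
    (twistedFrobenius Fq a ^ t) x = a ^ (∑ s ∈ range t, q ^ s) * x ^ q ^ t := by
  induction t generalizing x with
  | zero => simp
  | succ t ih =>
    rw [pow_succ, Module.End.mul_apply, ih, twistedFrobenius_apply, sum_range_succ, pow_add,
      mul_pow, ← pow_mul, ← pow_succ']
    ring

lemma twistedFrobenius_sub_smul_one_apply (b c x : K) :
    (twistedFrobenius Fq b - c • 1) x = b * x ^ q - c * x := rfl

variable (Fq) in
noncomputable def linearizedEval {k : ℕ} (a : K) : (Fin k → K) →ₗ[K] Module.End Fq K :=
  ∑ t : Fin k, (LinearMap.proj t).smulRight (twistedFrobenius Fq a ^ (t : ℕ))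

lemma linearizedEval_apply {k : ℕ} (a : K) (f : Fin k → K) (x : K) :
    linearizedEval Fq a f x = ∑ t, f t * (twistedFrobenius Fq a ^ (t : ℕ)) x := by
  simp [linearizedEval]

lemma linearizedEval_mulXSubRight (b c : K) {k : ℕ} (g : Fin k → K) :
    linearizedEval Fq b (mulXSubRight q c k g) =
      linearizedEval Fq b g * (twistedFrobenius Fq b - c • 1) := by
  ext x
  have hsemi : ∀ (t : ℕ) (y : K), (twistedFrobenius Fq b ^ t) (c * y) =
      c ^ q ^ t * (twistedFrobenius Fq b ^ t) y := fun t y => by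
    simp only [twistedFrobenius_pow_apply, mul_pow]; ring
  rw [linearizedEval_apply, Module.End.mul_apply, linearizedEval_apply, mulXSubRight_apply]
  simp only [Pi.sub_apply, Pi.mul_apply, sub_mul, sum_sub_distrib, LinearMap.sub_apply,
    LinearMap.smul_apply, Module.End.one_apply, smul_eq_mul, map_sub, hsemi, mul_sub]
  rw [Fin.sum_univ_succ, Fin.sum_univ_castSucc]
  simp [pow_succ, mul_assoc]

lemma exists_mulXSubRight_eq {b c γ : K} (hγ : γ ≠ 0)
    (hψ : (twistedFrobenius Fq b - c • 1) γ = 0) {k : ℕ} {f : Fin (k + 1) → K}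
    (hf : linearizedEval Fq b f γ = 0) :
    ∃ g, mulXSubRight q c k g = f := by
  set R : (Fin (k + 1) → K) →ₗ[K] K := LinearMap.applyₗ' K γ ∘ₗ linearizedEval Fq b
  have hR : ∀ f, R f = linearizedEval Fq b f γ := fun _ => rfl
  have hle : LinearMap.range (mulXSubRight q c k) ≤ LinearMap.ker R := by
    rintro _ ⟨g, rfl⟩
    rw [LinearMap.mem_ker, hR, linearizedEval_mulXSubRight, Module.End.mul_apply, hψ, map_zero]
  have hne : LinearMap.ker R ≠ ⊤ := fun htop => hγ <| by
    have : Pi.single 0 1 ∈ LinearMap.ker R := htop ▸ Submodule.mem_top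
    simpa [hR, linearizedEval_apply, Pi.single_apply] using this
  have heq : LinearMap.range (mulXSubRight q c k) = LinearMap.ker R := by
    refine Submodule.eq_of_le_of_finrank_le hle ?_
    have := Submodule.finrank_lt hne
    rw [LinearMap.finrank_range_of_inj (mulXSubRight_injective q c k)]
    simp only [Module.finrank_fin_fun] at this ⊢
    omega
  exact LinearMap.mem_range.1 (heq ▸ hf)

variable (Fq) in
noncomputable def encode {ℓ : ℕ} {nn : Fin ℓ → ℕ} (a : Fin ℓ → K) (x : ∀ i, Fin (nn i) → K)
    (k : ℕ) : (Fin k → K) →ₗ[K] (∀ i, Fin (nn i) → K) :=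
  LinearMap.pi fun i => LinearMap.pi fun j =>
    LinearMap.applyₗ' K (x i j) ∘ₗ linearizedEval Fq (a i)

lemma encode_apply {ℓ : ℕ} {nn : Fin ℓ → ℕ} (a : Fin ℓ → K) (x : ∀ i, Fin (nn i) → K)
    {k : ℕ} (f : Fin k → K) (i : Fin ℓ) (j : Fin (nn i)) :
    encode Fq a x k f i j =
      ∑ t : Fin k, f t * x i j ^ q ^ (t : ℕ) * a i ^ (∑ s ∈ range t, q ^ s) := by
  simp only [encode, LinearMap.pi_apply, LinearMap.comp_apply,
    LinearMap.applyₗ'_apply_apply, linearizedEval_apply, twistedFrobenius_pow_apply]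
  exact sum_congr rfl fun t _ => by ring

variable [Fintype K]

lemma pow_geom_sum_eq_of_apply_eq_zero {m : ℕ} (hcard : Fintype.card K = q ^ m) {b c x : K}
    (hx : x ≠ 0) (hker : (twistedFrobenius Fq b - c • 1) x = 0) :
    c ^ (∑ s ∈ range m, q ^ s) = b ^ (∑ s ∈ range m, q ^ s) := by
  rw [twistedFrobenius_sub_smul_one_apply, sub_eq_zero] at hker
  have hc : c = b * x ^ (q - 1) := by
    apply mul_right_cancel₀ hx
    rw [← hker, mul_assoc, ← pow_succ, Nat.sub_add_cancel Fintype.card_pos]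
  rw [hc, mul_pow, ← pow_mul, pow_sub_one_mul_geom_sum_eq_one Fintype.card_pos hcard hx, mul_one]

/- The nonzero elements of the kernel are `(q - 1)`-th roots of `c / b`, so the kernel has at most
`q` elements. -/
lemma finrank_ker_twistedFrobenius_sub_le_one {b : K} (hb : b ≠ 0) (c : K) :
    Module.finrank Fq (LinearMap.ker (twistedFrobenius Fq b - c • 1)) ≤ 1 := by
  classical
  set V := LinearMap.ker (twistedFrobenius Fq b - c • 1)
  have hq : 1 < q := Fintype.one_lt_card
  have hroots : (V : Set K) ⊆ ↑(insert 0 (Polynomial.nthRootsFinset (q - 1) (c / b))) := by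
    intro x hx
    by_cases hx0 : x = 0
    · simp [hx0]
    rw [SetLike.mem_coe, LinearMap.mem_ker, twistedFrobenius_sub_smul_one_apply,
      sub_eq_zero] at hx
    rw [coe_insert, Set.mem_insert_iff, mem_coe, Polynomial.mem_nthRootsFinset (by omega),
      eq_div_iff hb]
    refine .inr (mul_right_cancel₀ hx0 ?_)
    rw [mul_right_comm, ← pow_succ, Nat.sub_add_cancel hq.le, mul_comm, hx]
  have hcard : Nat.card V ≤ q := calc
    Nat.card V = (V : Set K).ncard := Nat.card_coe_set_eq _
    _ ≤ #(insert 0 (Polynomial.nthRootsFinset (q - 1) (c / b))) :=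
      (Set.ncard_le_ncard hroots).trans_eq (Set.ncard_coe_finset _)
    _ ≤ #(Polynomial.nthRootsFinset (q - 1) (c / b)) + 1 := card_insert_le _ _
    _ ≤ q - 1 + 1 := by
      rw [Polynomial.nthRootsFinset_def]
      gcongr
      exact (Multiset.toFinset_card_le _).trans (Polynomial.card_nthRoots _ _)
    _ = q := Nat.sub_add_cancel hq.le
  rw [Module.natCard_eq_pow_finrank (K := Fq), Nat.card_eq_fintype_card] at hcard
  exact (Nat.pow_le_pow_iff_right hq).1 (hcard.trans_eq (pow_one q).symm)

lemma sum_finrank_ker_twistedFrobenius_sub_le_one {m ℓ : ℕ} (hcard : Fintype.card K = q ^ m)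
    {a : Fin ℓ → Kˣ} (ha : Function.Injective fun i => (a i : K) ^ ∑ s ∈ range m, q ^ s) (c : K) :
    ∑ j, Module.finrank Fq (LinearMap.ker (twistedFrobenius Fq (a j : K) - c • 1)) ≤ 1 := by
  by_cases h : ∃ i, LinearMap.ker (twistedFrobenius Fq (a i : K) - c • 1) ≠ ⊥
  · obtain ⟨i, hi⟩ := h
    have hnorm : ∀ j, LinearMap.ker (twistedFrobenius Fq (a j : K) - c • 1) ≠ ⊥ →
        c ^ (∑ s ∈ range m, q ^ s) = (a j : K) ^ (∑ s ∈ range m, q ^ s) := fun j hj => by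
      obtain ⟨x, hx, hx0⟩ := Submodule.exists_mem_ne_zero_of_ne_bot hj
      exact pow_geom_sum_eq_of_apply_eq_zero hcard hx0 hx
    have hzero : ∀ j ≠ i,
        Module.finrank Fq (LinearMap.ker (twistedFrobenius Fq (a j : K) - c • 1)) = 0 :=
      fun j hji => Submodule.finrank_eq_zero.2 <| by
        by_contra hj
        exact hji (ha ((hnorm j hj).symm.trans (hnorm i hi)))
    rw [sum_eq_single i (fun j _ hji => hzero j hji) (by simp)]
    exact finrank_ker_twistedFrobenius_sub_le_one (a i).ne_zero c
  · push Not at h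
    rw [sum_eq_zero fun j _ => by rw [h j, finrank_bot]]
    exact zero_le_one

theorem sum_finrank_ker_linearizedEval_lt {m ℓ : ℕ} (hcard : Fintype.card K = q ^ m)
    {a : Fin ℓ → Kˣ} (ha : Function.Injective fun i => (a i : K) ^ ∑ s ∈ range m, q ^ s)
    {k : ℕ} {f : Fin k → K} (hf : f ≠ 0) :
    ∑ i, Module.finrank Fq (LinearMap.ker (linearizedEval Fq (a i : K) f)) < k := by
  induction k with
  | zero => exact absurd (Subsingleton.elim f 0) hf
  | succ k ih =>
    by_cases h : ∃ i, LinearMap.ker (linearizedEval Fq (a i : K) f) ≠ ⊥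
    swap
    · push Not at h
      rw [sum_eq_zero fun i _ => by rw [h i, finrank_bot]]
      exact k.succ_pos
    obtain ⟨i, hi⟩ := h
    obtain ⟨γ, hγ, hγ0⟩ := Submodule.exists_mem_ne_zero_of_ne_bot hi
    set c := (a i : K) * γ ^ (q - 1)
    have hψ : (twistedFrobenius Fq (a i : K) - c • 1) γ = 0 := by
      rw [twistedFrobenius_sub_smul_one_apply, mul_assoc, ← pow_succ,
        Nat.sub_add_cancel Fintype.card_pos, sub_self]
    obtain ⟨g, rfl⟩ := exists_mulXSubRight_eq hγ0 hψ hγ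
    have hg : g ≠ 0 := by
      rintro rfl
      exact hf (map_zero _)
    calc ∑ j, Module.finrank Fq (LinearMap.ker (linearizedEval Fq (a j : K) (mulXSubRight q c k g)))
        ≤ ∑ j, (Module.finrank Fq (LinearMap.ker (linearizedEval Fq (a j : K) g)) +
            Module.finrank Fq (LinearMap.ker (twistedFrobenius Fq (a j : K) - c • 1))) :=
          sum_le_sum fun j _ => by
            rw [linearizedEval_mulXSubRight, Module.End.mul_eq_comp, LinearMap.ker_comp]
            exact finrank_comap_le _ _
      _ = ∑ j, Module.finrank Fq (LinearMap.ker (linearizedEval Fq (a j : K) g)) +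
            ∑ j, Module.finrank Fq (LinearMap.ker (twistedFrobenius Fq (a j : K) - c • 1)) :=
          sum_add_distrib
      _ < k + 1 := by
        have := ih hg
        have := sum_finrank_ker_twistedFrobenius_sub_le_one hcard ha c
        omega

theorem sum_lt_srkVec_encode_add {m ℓ : ℕ} (hcard : Fintype.card K = q ^ m)
    {a : Fin ℓ → Kˣ} (ha : Function.Injective fun i => (a i : K) ^ ∑ s ∈ range m, q ^ s)
    {nn : Fin ℓ → ℕ} {x : ∀ i, Fin (nn i) → K} (hx : ∀ i, LinearIndependent Fq (x i))
    {k : ℕ} {f : Fin k → K} (hf : f ≠ 0) :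
    ∑ i, nn i < srkVec Fq (encode Fq (fun i => (a i : K)) x k f) + k := by
  set c := encode Fq (fun i => (a i : K)) x k f
  have hblock : ∀ i, nn i ≤ Module.finrank Fq (Submodule.span Fq (Set.range (c i))) +
      Module.finrank Fq (LinearMap.ker (linearizedEval Fq (a i : K) f)) := fun i => calc
    nn i = Module.finrank Fq (Submodule.span Fq (Set.range (x i))) := by
      rw [finrank_span_eq_card (hx i), Fintype.card_fin]
    _ ≤ Module.finrank Fq ((Submodule.span Fq (Set.range (c i))).comap
          (linearizedEval Fq (a i : K) f)) :=
      Submodule.finrank_mono <| Submodule.span_le.2 <| Set.range_subset_iff.2 fun j =>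
        Submodule.subset_span ⟨j, rfl⟩
    _ ≤ _ := finrank_comap_le _ _
  calc ∑ i, nn i
      ≤ ∑ i, (Module.finrank Fq (Submodule.span Fq (Set.range (c i))) +
          Module.finrank Fq (LinearMap.ker (linearizedEval Fq (a i : K) f))) :=
        sum_le_sum fun i _ => hblock i
    _ = srkVec Fq c + ∑ i, Module.finrank Fq (LinearMap.ker (linearizedEval Fq (a i : K) f)) :=
        sum_add_distrib
    _ < srkVec Fq c + k := by
        have := sum_finrank_ker_linearizedEval_lt hcard ha hf
        omega

theorem encode_injective {m ℓ : ℕ} (hcard : Fintype.card K = q ^ m)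
    {a : Fin ℓ → Kˣ} (ha : Function.Injective fun i => (a i : K) ^ ∑ s ∈ range m, q ^ s)
    {nn : Fin ℓ → ℕ} {x : ∀ i, Fin (nn i) → K} (hx : ∀ i, LinearIndependent Fq (x i))
    {k : ℕ} (hk : k ≤ ∑ i, nn i) :
    Function.Injective (encode Fq (fun i => (a i : K)) x k) :=
  (injective_iff_map_eq_zero _).2 fun f hf => by
    by_contra hf0
    have := sum_lt_srkVec_encode_add hcard ha hx hf0
    rw [hf, srkVec_zero] at this
    omega

end LinearizedRS

open LinearizedRS in
theorem linearized_reed_solomon_MSRD_general (Fq K : Type*) [Field Fq] [Fintype Fq] [Field K]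
    [Fintype K] [Algebra Fq K] {ℓ : ℕ}
    (m : ℕ) (β : Module.Basis (Fin m) Fq K)
    (a : Fin ℓ → Kˣ)
    (ha : ∀ i j : Fin ℓ, i ≠ j →
      (a i : K) ^ (∑ s ∈ Finset.range m, Fintype.card Fq ^ s) ≠
      (a j : K) ^ (∑ s ∈ Finset.range m, Fintype.card Fq ^ s))
    (nn : Fin ℓ → ℕ) (hnm : ∀ i, nn i ≤ m)
    (n : ℕ) (hn : n = ∑ i, nn i) (k : ℕ) (hk1 : 1 ≤ k) (hkn : k ≤ n) :
    ∃ 𝒞 : Submodule K (∀ i : Fin ℓ, Fin (nn i) → K),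
      (𝒞 : Set (∀ i : Fin ℓ, Fin (nn i) → K)) =
        {c | ∃ f : Fin k → K, ∀ (i : Fin ℓ) (j : Fin (nn i)),
          c i j = ∑ t : Fin k,
            f t * β (Fin.castLE (hnm i) j) ^ (Fintype.card Fq ^ (t : ℕ)) *
              (a i : K) ^ (∑ s ∈ Finset.range (t : ℕ), Fintype.card Fq ^ s)} ∧
      Module.finrank K 𝒞 = k ∧
      (∀ c ∈ 𝒞, c ≠ 0 → n - k + 1 ≤ srkVec Fq c) ∧
      sInf {w | ∃ c ∈ 𝒞, c ≠ 0 ∧ srkVec Fq c = w} = n - k + 1 := by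
  have hcard : Fintype.card K = Fintype.card Fq ^ m := by simpa using Module.card_fintype β
  have hnorm : Function.Injective fun i => (a i : K) ^ ∑ s ∈ range m, Fintype.card Fq ^ s :=
    fun i j h => not_not.1 fun hij => ha i j hij h
  have hβ : ∀ i, LinearIndependent Fq fun j : Fin (nn i) => β (Fin.castLE (hnm i) j) :=
    fun i => β.linearIndependent.comp _ (Fin.castLE_injective _)
  set Ψ := encode Fq (fun i => (a i : K)) (fun i j => β (Fin.castLE (hnm i) j)) k
  have hdist : ∀ c ∈ LinearMap.range Ψ, c ≠ 0 → n - k + 1 ≤ srkVec Fq c := by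
    rintro _ ⟨f, rfl⟩ hc
    have : n < srkVec Fq (Ψ f) + k :=
      hn ▸ sum_lt_srkVec_encode_add hcard hnorm hβ fun hf => hc (hf ▸ map_zero Ψ)
    omega
  have hdim : Module.finrank K (LinearMap.range Ψ) = k := by
    rw [LinearMap.finrank_range_of_inj (encode_injective hcard hnorm hβ (hn ▸ hkn)),
      Module.finrank_fin_fun]
  refine ⟨LinearMap.range Ψ, ?_, hdim, hdist, ?_⟩
  · ext c
    simp [Ψ, encode_apply, funext_iff, eq_comm]
  · obtain ⟨c, hc, hc0, hsingleton⟩ :=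
      exists_ne_zero_srkVec_add_finrank_le Fq (LinearMap.range Ψ) (by omega)
    have hmem : srkVec Fq c ∈ {w | ∃ c ∈ LinearMap.range Ψ, c ≠ 0 ∧ srkVec Fq c = w} :=
      ⟨c, hc, hc0, rfl⟩
    refine le_antisymm ((Nat.sInf_le hmem).trans (by omega)) ?_
    exact le_csInf ⟨_, hmem⟩ fun w ⟨c, hc, hc0, hw⟩ => hw ▸ hdist c hc hc0

/-- **Linearized Reed–Solomon codes are MSRD.**  Given `a₁, …, a_ℓ ∈ 𝔽_{q^m}^*` with pairwise
distinct norms and a basis `β₁, …, β_m` of `𝔽_{q^m}` over `𝔽_q`, the linearized Reed–Solomon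
code of dimension `k` is an `𝔽_{q^m}`-linear subspace of dimension `k`, every nonzero codeword
has sum-rank weight at least `n - k + 1`, and the code attains `d(𝒞) = n - k + 1`,
i.e. it is MSRD. -/
theorem linearized_reed_solomon_MSRD (Fq K : Type*) [Field Fq] [Fintype Fq] [Field K]
    [Fintype K] [Algebra Fq K] {ℓ : ℕ} (hℓ : 0 < ℓ)
    (m : ℕ) (β : Module.Basis (Fin m) Fq K)
    (a : Fin ℓ → Kˣ)
    (ha : ∀ i j : Fin ℓ, i ≠ j →
      (a i : K) ^ (∑ s ∈ Finset.range m, Fintype.card Fq ^ s) ≠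
      (a j : K) ^ (∑ s ∈ Finset.range m, Fintype.card Fq ^ s))
    (nn : Fin ℓ → ℕ) (hnpos : ∀ i, 0 < nn i) (hnm : ∀ i, nn i ≤ m)
    (n : ℕ) (hn : n = ∑ i, nn i) (k : ℕ) (hk1 : 1 ≤ k) (hkn : k ≤ n) :
    ∃ 𝒞 : Submodule K (∀ i : Fin ℓ, Fin (nn i) → K),
      (𝒞 : Set (∀ i : Fin ℓ, Fin (nn i) → K)) =
        {c | ∃ f : Fin k → K, ∀ (i : Fin ℓ) (j : Fin (nn i)),
          c i j = ∑ t : Fin k,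
            f t * β (Fin.castLE (hnm i) j) ^ (Fintype.card Fq ^ (t : ℕ)) *
              (a i : K) ^ (∑ s ∈ Finset.range (t : ℕ), Fintype.card Fq ^ s)} ∧
      Module.finrank K 𝒞 = k ∧
      (∀ c ∈ 𝒞, c ≠ 0 → n - k + 1 ≤ srkVec Fq c) ∧
      sInf {w | ∃ c ∈ 𝒞, c ≠ 0 ∧ srkVec Fq c = w} = n - k + 1 :=
  linearized_reed_solomon_MSRD_general Fq K m β a ha nn hnm n hn k hk1 hkn
end
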